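/- arXiv:1308.1565 — 8 statements merged into one kernel-verified Lean document; each statement's English description precedes it below -/
import Mathlib

section
/- There exists a subgroup of Sym(ℕ) which is not the automorphism group of any first-order relational structure on ℕ with relations of finite arity (namely, the group of finitely supported permutations). -/
/-!
Automorphism groups are closed in the topology of pointwise convergence: whether `g` preserves
a relation at a tuple `a` only depends on `g` restricted to the finitely many entries of `a`.
The finitely supported permutations, i.e. the products of transpositions, are dense: any
permutation agrees with such a product on any finite set. So an automorphism group containing
all of them is the whole of `Sym(ℕ)`, which contains the fixed-point-free involution `n ↦ n ^^^ 1`.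
-/

open Equiv

def relAut {α ι : Type*} (ar : ι → ℕ) (R : (i : ι) → (Fin (ar i) → α) → Prop) : Set (Perm α) :=
  {g | ∀ i (a : Fin (ar i) → α), R i a ↔ R i (fun j => g (a j))}

theorem mem_relAut_of_forall_finset_exists_eqOn {α ι : Type*} [DecidableEq α] {ar : ι → ℕ}
    {R : (i : ι) → (Fin (ar i) → α) → Prop} {g : Perm α}
    (hg : ∀ s : Finset α, ∃ h ∈ relAut ar R, Set.EqOn g h s) : g ∈ relAut ar R := by
  intro i a
  obtain ⟨h, hR, hgh⟩ := hg (Finset.univ.image a)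
  have hga : (fun j => g (a j)) = fun j => h (a j) :=
    funext fun j => hgh (by simp)
  rw [hga]
  exact hR i a

theorem Equiv.Perm.exists_mem_closure_isSwap_eqOn {α : Type*} [DecidableEq α] (g : Perm α)
    (s : Finset α) : ∃ h ∈ Subgroup.closure {σ : Perm α | σ.IsSwap}, Set.EqOn g h s := by
  induction s using Finset.induction with
  | empty => exact ⟨1, one_mem _, by simp⟩
  | insert a s ha ih =>
    obtain ⟨h, hmem, hgh⟩ := ih
    simp only [Finset.coe_insert, Set.insert_eq, Set.eqOn_union, Set.eqOn_singleton]
    by_cases hfix : h a = g a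
    · exact ⟨h, hmem, hfix.symm, hgh⟩
    -- composing with `swap (h a) (g a)` corrects `h` at `a` without moving the values on `s`
    refine ⟨swap (h a) (g a) * h,
      mul_mem (Subgroup.subset_closure ⟨h a, g a, hfix, rfl⟩) hmem, by simp, fun x hx => ?_⟩
    have hxa : x ≠ a := fun hxa => ha (hxa ▸ hx)
    rw [Perm.mul_apply, ← hgh hx, swap_apply_of_ne_of_ne]
    · exact fun hgx => hxa (h.injective (hgh hx ▸ hgx))
    · exact g.injective.ne hxa

theorem relAut_eq_univ_of_closure_isSwap_subset {α ι : Type*} [DecidableEq α] {ar : ι → ℕ}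
    {R : (i : ι) → (Fin (ar i) → α) → Prop}
    (hR : (Subgroup.closure {σ : Perm α | σ.IsSwap} : Set (Perm α)) ⊆ relAut ar R) :
    relAut ar R = Set.univ :=
  Set.eq_univ_of_forall fun g => mem_relAut_of_forall_finset_exists_eqOn fun s =>
    let ⟨h, hmem, hgh⟩ := g.exists_mem_closure_isSwap_eqOn s
    ⟨h, hR hmem, hgh⟩

theorem Nat.xor_one_ne_self (n : ℕ) : n ^^^ 1 ≠ n := by
  intro h
  have := congrArg (Nat.testBit · 0) h
  simp at this
  omega

def Nat.xorOnePerm : Perm ℕ :=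
  Function.Involutive.toPerm (· ^^^ 1) fun n => by simp

theorem Nat.not_finite_xorOnePerm_support : ¬ {a | Nat.xorOnePerm a ≠ a}.Finite := by
  have huniv : {a | Nat.xorOnePerm a ≠ a} = Set.univ :=
    Set.eq_univ_of_forall Nat.xor_one_ne_self
  rw [huniv]
  exact Set.infinite_univ

/-- There is a subgroup of `Sym(ℕ)` (namely the group of finitely supported permutations)
which is not the automorphism group of any first-order relational structure on `ℕ`
with relations of finite arity. -/
theorem stmt_4 :
    ∃ H : Subgroup (Equiv.Perm ℕ),
      (∀ g : Equiv.Perm ℕ, g ∈ H ↔ {a | g a ≠ a}.Finite) ∧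
      ¬ ∃ (ι : Type) (ar : ι → ℕ) (R : (i : ι) → (Fin (ar i) → ℕ) → Prop),
          (H : Set (Equiv.Perm ℕ)) =
            {g : Equiv.Perm ℕ | ∀ i (a : Fin (ar i) → ℕ), R i a ↔ R i (fun j => g (a j))} := by
  have hmem : ∀ g : Perm ℕ,
      g ∈ Subgroup.closure {σ : Perm ℕ | σ.IsSwap} ↔ {a | g a ≠ a}.Finite := fun g =>
    mem_closure_isSwap'
  refine ⟨_, hmem, ?_⟩
  rintro ⟨ι, ar, R, hR⟩
  have hall : relAut ar R = Set.univ := relAut_eq_univ_of_closure_isSwap_subset hR.le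
  have hxor : Nat.xorOnePerm ∈ Subgroup.closure {σ : Perm ℕ | σ.IsSwap} := by
    have hxor_aut : Nat.xorOnePerm ∈ relAut ar R := hall ▸ Set.mem_univ _
    rwa [← SetLike.mem_coe, hR]
  exact Nat.not_finite_xorOnePerm_support ((hmem _).mp hxor)
end

section
/- Let α be an infinite ordinal (or cardinal) and define the α-topology on Sym(Ω) by basic open sets G_{ā,b̄} = {g | g(ā) = b̄} for tuples ā, b̄ ∈ Ω^β with β < α. A subgroup H of Sym(Ω) is closed in the α-topology if and only if H is the automorphism group of a relational structure on Ω all of whose relations have arity less than α. -/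
/-- The α-topology on `Equiv.Perm Ω`: basic open sets are
`{g | g ∘ a = b}` for tuples `a b : ι → Ω` of length (cardinality) `< α`. -/
def alphaTop (Ω : Type) (α : Cardinal.{0}) : TopologicalSpace (Equiv.Perm Ω) :=
  TopologicalSpace.generateFrom
    {U | ∃ (ι : Type) (_ : Cardinal.mk ι < α) (a b : ι → Ω),
      U = {g : Equiv.Perm Ω | ∀ i, g (a i) = b i}}

/-!
Since `α` is infinite, the basic sets are closed under finite intersection and form a basis, so
`g` lies in the closure of `H` iff on every tuple of length `< α` it agrees with some element of
`H`. A closed `H` is therefore the automorphism group of the `H`-orbits of the inclusions `s ↪ Ω`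
of the subsets of size `< α`. Conversely, whether `g` preserves a relation at a tuple `t` depends
only on `g ∘ t`, i.e. on the basic set of `g` at `t`, so it cuts out a clopen set, and an
automorphism group is an intersection of such sets.
-/

open TopologicalSpace Topology Cardinal

namespace AlphaTop

variable {Ω : Type} {α : Cardinal.{0}}

def basis (Ω : Type) (α : Cardinal.{0}) : Set (Set (Equiv.Perm Ω)) :=
  {U | ∃ (ι : Type) (_ : #ι < α) (a b : ι → Ω), U = {g : Equiv.Perm Ω | ∀ i, g (a i) = b i}}

theorem finiteInter_basis (hα : ℵ₀ ≤ α) : FiniteInter (basis Ω α) where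
  univ_mem := ⟨PEmpty, by simpa using aleph0_pos.trans_le hα, PEmpty.elim, PEmpty.elim, by simp⟩
  inter_mem := by
    rintro _ ⟨ι₁, h₁, a₁, b₁, rfl⟩ _ ⟨ι₂, h₂, a₂, b₂, rfl⟩
    refine ⟨ι₁ ⊕ ι₂, by simpa using add_lt_of_lt hα h₁ h₂, Sum.elim a₁ a₂, Sum.elim b₁ b₂, ?_⟩
    ext g
    simp [Sum.forall]

theorem isTopologicalBasis (hα : ℵ₀ ≤ α) :
    @IsTopologicalBasis _ (alphaTop Ω α) (basis Ω α) :=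
  @isTopologicalBasis_of_subbasis_of_finiteInter _ (alphaTop Ω α) _ rfl (finiteInter_basis hα)

theorem mem_closure_iff (hα : ℵ₀ ≤ α) {s : Set (Equiv.Perm Ω)} {g : Equiv.Perm Ω} :
    g ∈ @closure _ (alphaTop Ω α) s ↔
      ∀ (ι : Type), #ι < α → ∀ a : ι → Ω, ∃ h ∈ s, ∀ i, h (a i) = g (a i) := by
  rw [@IsTopologicalBasis.mem_closure_iff _ (alphaTop Ω α) _ (isTopologicalBasis hα)]
  constructor
  · intro hg ι hι a
    obtain ⟨h, hh, hs⟩ := hg _ ⟨ι, hι, a, fun i => g (a i), rfl⟩ fun _ => rfl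
    exact ⟨h, hs, hh⟩
  · rintro hg _ ⟨ι, hι, a, b, rfl⟩ hgb
    obtain ⟨h, hs, hh⟩ := hg ι hι a
    exact ⟨h, fun i => (hh i).trans (hgb i), hs⟩

theorem isOpen_setOf_comp {β : Type} (hβ : #β < α) (t : β → Ω) (P : (β → Ω) → Prop) :
    IsOpen[alphaTop Ω α] {g : Equiv.Perm Ω | P fun j => g (t j)} := by
  have hunion : {g : Equiv.Perm Ω | P fun j => g (t j)} =
      ⋃ c ∈ {c | P c}, {g : Equiv.Perm Ω | ∀ j, g (t j) = c j} := by
    ext g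
    simp only [Set.mem_iUnion, exists_prop]
    refine ⟨fun hg => ⟨_, hg, fun _ => rfl⟩, ?_⟩
    rintro ⟨c, hc, hgc⟩
    rwa [← funext hgc] at hc
  rw [hunion]
  exact @isOpen_biUnion _ _ (alphaTop Ω α) _ _ fun c _ =>
    GenerateOpen.basic _ ⟨β, hβ, t, c, rfl⟩

theorem isClosed_setOf_iff_comp {β : Type} (hβ : #β < α) (t : β → Ω) (p : Prop)
    (P : (β → Ω) → Prop) :
    IsClosed[alphaTop Ω α] {g : Equiv.Perm Ω | p ↔ P fun j => g (t j)} := by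
  let _ := alphaTop Ω α
  rw [← isOpen_compl_iff, Set.compl_ofPred]
  by_cases hp : p
  · simpa [hp] using isOpen_setOf_comp hβ t fun c => ¬P c
  · simpa [hp] using isOpen_setOf_comp hβ t P

theorem isClosed_setOf_preserves {ι : Type} {β : ι → Type} (hβ : ∀ i, #(β i) < α)
    (R : (i : ι) → Set (β i → Ω)) :
    IsClosed[alphaTop Ω α]
      {g : Equiv.Perm Ω | ∀ i (t : β i → Ω), t ∈ R i ↔ (fun j => g (t j)) ∈ R i} := by
  let _ := alphaTop Ω α
  simp only [Set.ofPred_forall]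
  exact isClosed_iInter fun i => isClosed_iInter fun t =>
    isClosed_setOf_iff_comp (hβ i) t _ (· ∈ R i)

theorem eq_setOf_preserves_orbits (hα : ℵ₀ ≤ α) {H : Subgroup (Equiv.Perm Ω)}
    (hH : IsClosed[alphaTop Ω α] (H : Set (Equiv.Perm Ω))) :
    (H : Set (Equiv.Perm Ω)) =
      {g : Equiv.Perm Ω | ∀ (s : {s : Set Ω // #s < α}) (t : s.1 → Ω),
        t ∈ MulAction.orbit H (Subtype.val : s.1 → Ω) ↔
          (fun j => g (t j)) ∈ MulAction.orbit H (Subtype.val : s.1 → Ω)} := by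
  ext g
  constructor
  · intro hg s t
    change _ ↔ (⟨g, hg⟩ : H) • t ∈ _
    rw [← MulAction.orbit_eq_iff, ← MulAction.orbit_eq_iff, MulAction.orbit_smul]
  · intro hg
    let _ := alphaTop Ω α
    rw [← hH.closure_eq, mem_closure_iff hα]
    intro ι hι a
    obtain ⟨h, hh⟩ := MulAction.mem_orbit_iff.mp <|
      (hg ⟨Set.range a, mk_range_le.trans_lt hι⟩ Subtype.val).mp (MulAction.mem_orbit_self _)
    exact ⟨h, h.2, fun i => congrFun hh ⟨a i, Set.mem_range_self i⟩⟩

end AlphaTop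

open AlphaTop

/-- For an infinite cardinal `α`, a subgroup `H` of `Sym(Ω)` is closed in the α-topology
iff `H` is the automorphism group of a relational structure on `Ω` all of whose relations
have arity `< α` (relations of arity `β` being subsets of `Ω^β`, preserved coordinatewise). -/
theorem stmt_5 (Ω : Type) (α : Cardinal.{0}) (hα : Cardinal.aleph0 ≤ α)
    (H : Subgroup (Equiv.Perm Ω)) :
    @IsClosed _ (alphaTop Ω α) (H : Set (Equiv.Perm Ω)) ↔
      ∃ (ι : Type) (β : ι → Type) (_ : ∀ i, Cardinal.mk (β i) < α)
        (R : (i : ι) → Set (β i → Ω)),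
        (H : Set (Equiv.Perm Ω)) =
          {g : Equiv.Perm Ω | ∀ i (t : β i → Ω), t ∈ R i ↔ (fun j => g (t j)) ∈ R i} := by
  refine ⟨fun hH => ?_, fun ⟨ι, β, hβ, R, hR⟩ => hR ▸ isClosed_setOf_preserves hβ R⟩
  exact ⟨{s : Set Ω // #s < α}, fun s => s.1, fun s => s.2,
    fun s => MulAction.orbit H Subtype.val, eq_setOf_preserves_orbits hα hH⟩
end

section
/- The map g ↦ g* from Sym(Ω) to Sym(𝒫(Ω)), where g*(A) = {g(a) | a ∈ A}, is an injective group homomorphism, and its image G* = {g* | g ∈ Sym(Ω)} is a closed subgroup of Sym(𝒫(Ω)) in the topology of pointwise convergence on Sym(𝒫(Ω)). -/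
/-- The topology of pointwise convergence on `Equiv.Perm X`. -/
def permTop (X : Type) : TopologicalSpace (Equiv.Perm X) :=
  TopologicalSpace.generateFrom
    {U | ∃ (k : ℕ) (a b : Fin k → X), U = {g : Equiv.Perm X | ∀ i, g (a i) = b i}}

/-- The induced action `g*` of a permutation `g` of `Ω` on the power set:
`g*(A) = {g a | a ∈ A}`. -/
def starPerm {Ω : Type} (g : Equiv.Perm Ω) : Equiv.Perm (Set Ω) where
  toFun A := g '' A
  invFun A := g.symm '' A
  left_inv A := by ext x; simp
  right_inv A := by ext x; simp

/-!
A permutation `p` of `𝒫(Ω)` is of the form `g*` exactly when it preserves inclusion in both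
directions: such a `p` is an order automorphism of `𝒫(Ω)`, hence permutes the atoms, i.e. the
singletons, and then `y ∈ p A ↔ {y} ⊆ p A ↔ p⁻¹ {y} ⊆ A`. Each condition `p A ⊆ p B ↔ A ⊆ B`
only involves the two values `p A` and `p B`, so it defines a clopen set in the topology of
pointwise convergence, and `G*` is an intersection of such sets.
-/

open Topology

lemma starPerm_apply {Ω : Type} (g : Equiv.Perm Ω) (A : Set Ω) :
    starPerm g A = g '' A := rfl

lemma continuous_permTop_apply {X : Type} [TopologicalSpace X] [DiscreteTopology X] (a : X) :
    Continuous[permTop X, ‹_›] (fun p : Equiv.Perm X => p a) := by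
  let := permTop X
  refine continuous_discrete_rng.mpr fun b =>
    TopologicalSpace.GenerateOpen.basic _ ⟨1, ![a], ![b], ?_⟩
  ext p
  simp

lemma OrderIso.exists_apply_singleton_eq {α β : Type*} (e : Set α ≃o Set β) (x : α) :
    ∃ y, e {x} = {y} :=
  Set.isAtom_iff.mp ((e.isAtom_iff _).mpr (Set.isAtom_singleton x))

lemma Equiv.exists_image_eq_of_orderIso {α β : Type*} (e : Set α ≃o Set β) :
    ∃ g : α ≃ β, ∀ A, e A = g '' A := by
  choose f hf using e.exists_apply_singleton_eq
  choose f' hf' using e.symm.exists_apply_singleton_eq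
  have left_inv (x : α) : f' (f x) = x := by
    have h := e.symm_apply_apply {x}
    rwa [hf, hf', Set.singleton_eq_singleton_iff] at h
  have right_inv (y : β) : f (f' y) = y := by
    have h := e.apply_symm_apply {y}
    rwa [hf', hf, Set.singleton_eq_singleton_iff] at h
  let g : α ≃ β := ⟨f, f', left_inv, right_inv⟩
  refine ⟨g, fun A => Set.ext fun y => ?_⟩
  calc y ∈ e A ↔ {y} ⊆ e A := Set.singleton_subset_iff.symm
    _ ↔ e.symm {y} ⊆ A := e.symm_apply_le.symm
    _ ↔ f' y ∈ A := by rw [hf', Set.singleton_subset_iff]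
    _ ↔ y ∈ g '' A := by rw [g.image_eq_preimage_symm]; rfl

lemma exists_starPerm_eq_iff {Ω : Type} (p : Equiv.Perm (Set Ω)) :
    (∃ g, starPerm g = p) ↔ ∀ A B, p A ⊆ p B ↔ A ⊆ B := by
  constructor
  · rintro ⟨g, rfl⟩ A B
    exact Set.image_subset_image_iff g.injective
  · intro hp
    obtain ⟨g, hg⟩ := Equiv.exists_image_eq_of_orderIso ⟨p, hp _ _⟩
    exact ⟨g, Equiv.ext fun A => (hg A).symm⟩

/-- The map `g ↦ g*` from `Sym(Ω)` to `Sym(𝒫(Ω))` is an injective group homomorphism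
whose image `G* = {g* | g ∈ Sym(Ω)}` is closed in `Sym(𝒫(Ω))` with the topology of
pointwise convergence. -/
theorem stmt_8 (Ω : Type) :
    Function.Injective (starPerm (Ω := Ω)) ∧
    (∀ g h : Equiv.Perm Ω, starPerm (g * h) = starPerm g * starPerm h) ∧
    @IsClosed _ (permTop (Set Ω)) {p : Equiv.Perm (Set Ω) | ∃ g : Equiv.Perm Ω, starPerm g = p} := by
  refine ⟨fun g h hgh => Equiv.ext fun x => ?_, fun g h => Equiv.ext fun A => ?_, ?_⟩
  · simpa [starPerm_apply] using congrArg (· {x}) hgh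
  · simp [starPerm_apply, Set.image_image]
  · let := permTop (Set Ω)
    let : TopologicalSpace (Set Ω) := ⊥
    have : DiscreteTopology (Set Ω) := ⟨rfl⟩
    simp_rw [exists_starPerm_eq_iff, Set.ofPred_forall]
    exact isClosed_iInter fun A => isClosed_iInter fun B =>
      (isClosed_discrete {q : Set Ω × Set Ω | q.1 ⊆ q.2 ↔ A ⊆ B}).preimage
        ((continuous_permTop_apply A).prodMk (continuous_permTop_apply B))
end

section
/- A subgroup H of Sym(Ω) is the automorphism group of some monadic second-order structure on Ω if and only if H is closed in the second-order topology on Sym(Ω), whose basic open sets are {g | g*(Aᵢ) = Bᵢ for i ≤ n} for finitely many subsets Aᵢ, Bᵢ ⊆ Ω. -/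
/-!
The automorphism group of a monadic second-order structure is an intersection of sets of the form
`{g | P (g '' A₁, …, g '' Aₙ)}` (a first-order relation being read through the singletons
`{a₁}, …, {aₙ}`), and each of these is a union of basic open sets, as is its complement.
Conversely, a closed subgroup `H` is the automorphism group of the structure whose quantifiers are
the `H`-orbits of finite tuples of subsets: a permutation `g` preserving them sends every tuple `A`
into the `H`-orbit of `A`, so every basic neighbourhood of `g` meets `H`.
-/

/-- The second-order topology on `Equiv.Perm Ω`: basic open sets are
`{g | g '' A i = B i, i ≤ n}` for finitely many subsets `A i, B i ⊆ Ω`. -/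
def soTop (Ω : Type) : TopologicalSpace (Equiv.Perm Ω) :=
  TopologicalSpace.generateFrom
    {U | ∃ (n : ℕ) (A B : Fin n → Set Ω),
      U = {g : Equiv.Perm Ω | ∀ i, g '' A i = B i}}

open Pointwise

section SecondOrderTopology

variable {Ω : Type}

attribute [local instance] soTop

def mapsOnto {n : ℕ} (A B : Fin n → Set Ω) : Set (Equiv.Perm Ω) :=
  {g | ∀ i, g '' A i = B i}

theorem isOpen_mapsOnto {n : ℕ} (A B : Fin n → Set Ω) : IsOpen (mapsOnto A B) :=
  TopologicalSpace.isOpen_generateFrom_of_mem ⟨n, A, B, rfl⟩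

theorem mapsOnto_inter_mapsOnto {n m : ℕ} (A B : Fin n → Set Ω) (A' B' : Fin m → Set Ω) :
    mapsOnto A B ∩ mapsOnto A' B' = mapsOnto (Fin.append A A') (Fin.append B B') := by
  ext g
  simp [mapsOnto, Fin.forall_fin_add]

theorem isTopologicalBasis_mapsOnto :
    TopologicalSpace.IsTopologicalBasis
      {U : Set (Equiv.Perm Ω) | ∃ (n : ℕ) (A B : Fin n → Set Ω), U = mapsOnto A B} := by
  refine TopologicalSpace.isTopologicalBasis_of_subbasis_of_finiteInter rfl ⟨?_, ?_⟩
  · exact ⟨0, Fin.elim0, Fin.elim0, by ext; simp [mapsOnto]⟩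
  · rintro _ ⟨n, A, B, rfl⟩ _ ⟨m, A', B', rfl⟩
    exact ⟨n + m, _, _, mapsOnto_inter_mapsOnto A B A' B'⟩

theorem isOpen_setOf_image_mem {n : ℕ} (A : Fin n → Set Ω) (S : Set (Fin n → Set Ω)) :
    IsOpen {g : Equiv.Perm Ω | (fun j => g '' A j) ∈ S} := by
  have : {g : Equiv.Perm Ω | (fun j => g '' A j) ∈ S} = ⋃ B ∈ S, mapsOnto A B := by
    ext g
    simp [mapsOnto, ← funext_iff]
  rw [this]
  exact isOpen_biUnion fun B _ => isOpen_mapsOnto A B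

theorem isClosed_setOf_image_mem {n : ℕ} (A : Fin n → Set Ω) (S : Set (Fin n → Set Ω)) :
    IsClosed {g : Equiv.Perm Ω | (fun j => g '' A j) ∈ S} :=
  isOpen_compl_iff.mp (isOpen_setOf_image_mem A Sᶜ)

theorem isClosed_setOf_apply_mem {n : ℕ} (a : Fin n → Ω) (S : Set (Fin n → Ω)) :
    IsClosed {g : Equiv.Perm Ω | (fun j => g (a j)) ∈ S} := by
  have : {g : Equiv.Perm Ω | (fun j => g (a j)) ∈ S} =
      {g : Equiv.Perm Ω | (fun j => g '' {a j}) ∈ (fun b j => ({b j} : Set Ω)) '' S} := by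
    ext g
    simp only [Set.mem_ofPred_eq, Set.image_singleton]
    exact (Set.singleton_injective.comp_left (α := Fin n)).mem_set_image.symm
  rw [this]
  exact isClosed_setOf_image_mem _ _

theorem isClosed_setOf_preserves {ι κ : Type} {ar : ι → ℕ} {qar : κ → ℕ}
    (R : (i : ι) → (Fin (ar i) → Ω) → Prop) (Q : (q : κ) → (Fin (qar q) → Set Ω) → Prop) :
    IsClosed {g : Equiv.Perm Ω |
      (∀ i (a : Fin (ar i) → Ω), R i a ↔ R i (fun j => g (a j))) ∧
      (∀ q (A : Fin (qar q) → Set Ω), Q q A ↔ Q q (fun j => g '' A j))} := by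
  simp only [Set.ofPred_and, Set.ofPred_forall]
  exact .inter (isClosed_iInter fun i => isClosed_iInter fun a =>
      isClosed_setOf_apply_mem a {b | R i a ↔ R i b})
    (isClosed_iInter fun q => isClosed_iInter fun A =>
      isClosed_setOf_image_mem A {B | Q q A ↔ Q q B})

theorem mem_closure_iff_forall_exists_image_eq {S : Set (Equiv.Perm Ω)} {g : Equiv.Perm Ω} :
    g ∈ closure S ↔ ∀ (n : ℕ) (A : Fin n → Set Ω), ∃ h ∈ S, ∀ j, h '' A j = g '' A j := by
  rw [isTopologicalBasis_mapsOnto.mem_closure_iff]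
  constructor
  · intro hg n A
    obtain ⟨h, hA, hS⟩ := hg _ ⟨n, A, _, rfl⟩ fun _ => rfl
    exact ⟨h, hS, hA⟩
  · rintro hg _ ⟨n, A, B, rfl⟩ hgB
    obtain ⟨h, hS, hA⟩ := hg n A
    exact ⟨h, fun j => (hA j).trans (hgB j), hS⟩

variable (H : Subgroup (Equiv.Perm Ω))

theorem orbit_image_of_mem {g : Equiv.Perm Ω} (hg : g ∈ H) {n : ℕ} (A : Fin n → Set Ω) :
    MulAction.orbit H (fun j => g '' A j) = MulAction.orbit H A :=
  MulAction.orbit_smul (⟨g, hg⟩ : H) A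

theorem mem_of_forall_mem_orbit_image (hH : IsClosed (H : Set (Equiv.Perm Ω)))
    {g : Equiv.Perm Ω}
    (hg : ∀ (n : ℕ) (A : Fin n → Set Ω), A ∈ MulAction.orbit H (fun j => g '' A j)) :
    g ∈ H := by
  rw [← SetLike.mem_coe, ← hH.closure_eq]
  refine mem_closure_iff_forall_exists_image_eq.mpr fun n A => ?_
  obtain ⟨h, hA⟩ := MulAction.mem_orbit_symm.mp (hg n A)
  exact ⟨h, h.2, funext_iff.mp hA⟩

end SecondOrderTopology

/-- A subgroup `H` of `Sym(Ω)` is the automorphism group of some monadic second-order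
structure on `Ω` (finitary relations on `Ω` together with finitary monadic quantifiers,
i.e. relations on `𝒫(Ω)`, preserved via the induced action on subsets) if and only if
`H` is closed in the second-order topology. -/
theorem stmt_9 (Ω : Type) (H : Subgroup (Equiv.Perm Ω)) :
    (∃ (ι : Type) (ar : ι → ℕ) (R : (i : ι) → (Fin (ar i) → Ω) → Prop)
       (κ : Type) (qar : κ → ℕ) (Q : (q : κ) → (Fin (qar q) → Set Ω) → Prop),
       (H : Set (Equiv.Perm Ω)) =
         {g : Equiv.Perm Ω |
           (∀ i (a : Fin (ar i) → Ω), R i a ↔ R i (fun j => g (a j))) ∧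
           (∀ q (A : Fin (qar q) → Set Ω), Q q A ↔ Q q (fun j => g '' A j))}) ↔
    @IsClosed _ (soTop Ω) (H : Set (Equiv.Perm Ω)) := by
  constructor
  · rintro ⟨ι, ar, R, κ, qar, Q, hH⟩
    rw [hH]
    exact isClosed_setOf_preserves R Q
  · intro hH
    refine ⟨Empty, Empty.elim, fun i => i.elim, (n : ℕ) × (Fin n → Set Ω), Sigma.fst,
      fun A B => A.2 ∈ MulAction.orbit H B, ?_⟩
    ext g
    simp only [SetLike.mem_coe, Set.mem_ofPred_eq, IsEmpty.forall_iff, true_and]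
    constructor
    · intro hg A B
      rw [orbit_image_of_mem H hg]
    · intro hg
      exact mem_of_forall_mem_orbit_image H hH fun n A =>
        (hg ⟨n, A⟩ A).mp (MulAction.mem_orbit_self A)
end

section
/- Let Ω = ℕ with its usual order. Define g : ℕ → ℕ by g(m) = (n+1)² − (m + 1 − n²) where n² ≤ m < (n+1)². Then g is a permutation of ℕ that is not a piecewise order isomorphism: there is no finite partition (Aᵢ)_{i≤k} of ℕ such that g restricted to each Aᵢ is order-preserving. -/
/-! On the block `[n², (n+1)²)` the map `g` is the order-reversing involution, so `g` is an
involution of `ℕ`, hence bijective. A set on which `g` is strictly monotone meets each block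
in at most one point, so `k + 1` such sets cover at most `k + 1` points of a block; the
block `[(k+1)², (k+2)²)` has `2k + 3` points. -/

theorem StrictAntiOn.subsingleton_inter_of_strictMonoOn {α β : Type*} [LinearOrder α]
    [Preorder β] {f : α → β} {s t : Set α} (hs : StrictAntiOn f s) (ht : StrictMonoOn f t) :
    (s ∩ t).Subsingleton := by
  rintro x ⟨hxs, hxt⟩ y ⟨hys, hyt⟩
  by_contra hne
  rcases lt_or_gt_of_ne hne with hlt | hlt
  · exact lt_asymm (hs hxs hys hlt) (ht hxt hyt hlt)
  · exact lt_asymm (hs hys hxs hlt) (ht hyt hxt hlt)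

theorem Finset.card_le_card_of_subsingleton_cover {ι α : Type*} [Fintype ι] (s : Finset α)
    (A : ι → Set α) (hcov : ∀ x, ∃ i, x ∈ A i) (hsub : ∀ i, (↑s ∩ A i).Subsingleton) :
    s.card ≤ Fintype.card ι := by
  choose f hf using hcov
  refine Finset.card_le_card_of_injOn f (fun x _ ↦ Finset.mem_coe.2 (Finset.mem_univ _)) ?_
  intro x hx y hy hxy
  exact hsub (f x) ⟨hx, hf x⟩ ⟨hy, hxy ▸ hf y⟩

section BlockReversal

variable {g : ℕ → ℕ}
  (hg : ∀ n m : ℕ, n ^ 2 ≤ m → m < (n + 1) ^ 2 → g m = (n + 1) ^ 2 - (m + 1 - n ^ 2))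
include hg

theorem involutive_of_reverses_square_blocks : Function.Involutive g := by
  intro m
  have hlo : Nat.sqrt m ^ 2 ≤ m := Nat.sqrt_le' m
  have hhi : m < (Nat.sqrt m + 1) ^ 2 := Nat.lt_succ_sqrt' m
  have hgm := hg _ m hlo hhi
  rw [hg (Nat.sqrt m) (g m) (by omega) (by omega)]
  omega

theorem strictAntiOn_Ico_sq_of_reverses_square_blocks (n : ℕ) :
    StrictAntiOn g (Set.Ico (n ^ 2) ((n + 1) ^ 2)) := by
  rintro a ⟨ha, ha'⟩ b ⟨hb, hb'⟩ hab
  rw [hg n a ha ha', hg n b hb hb']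
  omega

end BlockReversal

/-- The function `g : ℕ → ℕ` defined by `g(m) = (n+1)² − (m + 1 − n²)` for
`n² ≤ m < (n+1)²` is a permutation of `ℕ` which is not a piecewise order isomorphism:
there is no finite partition `(Aᵢ)` of `ℕ` such that `g` is order-preserving on each `Aᵢ`. -/
theorem stmt_11 (g : ℕ → ℕ)
    (hg : ∀ n m : ℕ, n ^ 2 ≤ m → m < (n + 1) ^ 2 → g m = (n + 1) ^ 2 - (m + 1 - n ^ 2)) :
    Function.Bijective g ∧
    ¬ ∃ (k : ℕ) (A : Fin (k + 1) → Set ℕ),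
        Pairwise (Function.onFun Disjoint A) ∧
        (⋃ i, A i) = Set.univ ∧
        ∀ i, StrictMonoOn g (A i) := by
  refine ⟨(involutive_of_reverses_square_blocks hg).bijective, ?_⟩
  rintro ⟨k, A, -, hcov, hmono⟩
  have hanti := strictAntiOn_Ico_sq_of_reverses_square_blocks hg (k + 1)
  have hcard := Finset.card_le_card_of_subsingleton_cover (Finset.Ico ((k + 1) ^ 2) ((k + 2) ^ 2))
    A (fun x ↦ Set.mem_iUnion.1 (hcov ▸ Set.mem_univ x))
    (fun i ↦ by simpa using hanti.subsingleton_inter_of_strictMonoOn (hmono i))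
  rw [Nat.card_Ico, Fintype.card_fin,
    show (k + 2) ^ 2 = (k + 1) ^ 2 + (2 * k + 3) by ring] at hcard
  omega
end

section
/- There exists a proper dense (in the second-order topology) subgroup of Sym(ℕ); consequently not every subgroup of Sym(ℕ) is the automorphism group of a monadic second-order structure. -/
open Set

noncomputable section

-- order iso between equinumerous subsets of ℕ
lemma exists_orderIso_of_equiv (X Y : Set ℕ) (e : X ≃ Y) : Nonempty (X ≃o Y) := by
  cases finite_or_infinite X with
  | inl hX =>
    haveI : Finite Y := Finite.of_equiv X e
    haveI := Fintype.ofFinite X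
    haveI := Fintype.ofFinite Y
    have hc : Fintype.card Y = Fintype.card X := (Fintype.card_congr e).symm
    exact ⟨(Fintype.orderIsoFinOfCardEq X rfl).symm.trans (Fintype.orderIsoFinOfCardEq Y hc)⟩
  | inr hX =>
    haveI : Infinite Y := Equiv.infinite_iff e |>.mp hX
    exact ⟨(Nat.Subtype.orderIsoOfNat X).symm.trans (Nat.Subtype.orderIsoOfNat Y)⟩

end

noncomputable section

lemma glue (n : ℕ) (A B : Fin n → Set ℕ) (g : Equiv.Perm ℕ)
    (hg : ∀ i, g '' A i = B i) :
    ∃ h : Equiv.Perm ℕ,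
      (∀ i, h '' A i = B i) ∧
      ∃ (k : ℕ) (P : Fin k → Set ℕ), (∀ x, ∃ i, x ∈ P i) ∧ ∀ i, StrictMonoOn h (P i) := by
  classical
  set atA : (Fin n → Bool) → Set ℕ := fun s => {x | ∀ i, x ∈ A i ↔ s i = true} with hatA
  set atB : (Fin n → Bool) → Set ℕ := fun s => {x | ∀ i, x ∈ B i ↔ s i = true} with hatB
  have key : ∀ x i, x ∈ A i ↔ g x ∈ B i := by
    intro x i
    rw [← hg i]
    exact ⟨fun h => ⟨x, h, rfl⟩, fun ⟨y, hy, hxy⟩ => by rwa [← g.injective hxy]⟩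
  have geq : ∀ s : Fin n → Bool, ∀ x, x ∈ atA s ↔ g x ∈ atB s := fun s x =>
    forall_congr' fun i => iff_congr (key x i) Iff.rfl
  have eAB : ∀ s, (atA s : Type) ≃ atB s := fun s => g.subtypeEquiv (geq s)
  have φ : ∀ s, (atA s : Type) ≃o atB s := fun s =>
    (exists_orderIso_of_equiv _ _ (eAB s)).some
  set sx : ℕ → (Fin n → Bool) := fun x i => decide (x ∈ A i) with hsx
  set sy : ℕ → (Fin n → Bool) := fun y i => decide (y ∈ B i) with hsy
  have hx_mem : ∀ x, x ∈ atA (sx x) := fun x i => decide_eq_true_iff.symm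
  have hy_mem : ∀ y, y ∈ atB (sy y) := fun y i => decide_eq_true_iff.symm
  have hsx_eq : ∀ (s) (x), x ∈ atA s → sx x = s := by
    intro s x hx
    funext i
    have h1 := hx i
    by_cases hxa : x ∈ A i
    · simp [hsx, hxa, (h1.mp hxa).symm]
    · have h2 : s i = false := by
        cases hsi : s i
        · rfl
        · exact absurd (h1.mpr hsi) hxa
      simp [hsx, hxa, h2]
  have hsy_eq : ∀ (s) (y), y ∈ atB s → sy y = s := by
    intro s y hy
    funext i
    have h1 := hy i
    by_cases hxa : y ∈ B i
    · simp [hsy, hxa, (h1.mp hxa).symm]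
    · have h2 : s i = false := by
        cases hsi : s i
        · rfl
        · exact absurd (h1.mpr hsi) hxa
      simp [hsy, hxa, h2]
  set h : ℕ → ℕ := fun x => (φ (sx x) ⟨x, hx_mem x⟩ : ℕ) with hh
  have hdef : ∀ (s) (x) (hx : x ∈ atA s), h x = (φ s ⟨x, hx⟩ : ℕ) := by
    intro s x hx
    obtain rfl : s = sx x := (hsx_eq s x hx).symm
    rfl
  have hmemB : ∀ x, h x ∈ atB (sx x) := fun x => (φ (sx x) ⟨x, hx_mem x⟩).2
  have hinj : Function.Injective h := by
    intro x y hxy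
    have h1 : sx x = sx y := by
      have e1 := hsy_eq _ _ (hmemB x)
      have e2 := hsy_eq _ _ (hmemB y)
      rw [← e1, ← e2, hxy]
    have hy' : y ∈ atA (sx x) := h1 ▸ hx_mem y
    have e3 : (φ (sx x) ⟨x, hx_mem x⟩ : ℕ) = (φ (sx x) ⟨y, hy'⟩ : ℕ) := by
      rw [← hdef _ _ (hx_mem x), ← hdef _ _ hy']
      exact hxy
    have := (φ (sx x)).injective (Subtype.ext e3)
    exact congrArg Subtype.val this
  have hsurj : Function.Surjective h := by
    intro y
    set z := (φ (sy y)).symm ⟨y, hy_mem y⟩ with hz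
    refine ⟨z.1, ?_⟩
    rw [hdef (sy y) z.1 z.2]
    have : (⟨z.1, z.2⟩ : atA (sy y)) = z := rfl
    rw [this, hz, OrderIso.apply_symm_apply]
  let hperm : Equiv.Perm ℕ := Equiv.ofBijective h ⟨hinj, hsurj⟩
  have hmem : ∀ x i, x ∈ A i ↔ h x ∈ B i := by
    intro x i
    have h1 := hmemB x i
    simp only [hsx, decide_eq_true_eq] at h1
    exact h1.symm
  refine ⟨hperm, ?_, ?_⟩
  · intro i
    ext y
    rw [Equiv.image_eq_preimage_symm, Set.mem_preimage]
    have h1 := hmem (hperm.symm y) i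
    have h2 : h (hperm.symm y) = y := hperm.apply_symm_apply y
    rw [h2] at h1
    exact h1
  · refine ⟨Fintype.card (Fin n → Bool), atA ∘ (Fintype.equivFin (Fin n → Bool)).symm,
      fun x => ⟨Fintype.equivFin _ (sx x), ?_⟩, ?_⟩
    · simp only [Function.comp_apply, Equiv.symm_apply_apply]
      exact hx_mem x
    · intro i a ha b hb hab
      set s := (Fintype.equivFin (Fin n → Bool)).symm i
      have ha' : a ∈ atA s := ha
      have hb' : b ∈ atA s := hb
      show h a < h b
      rw [hdef s a ha', hdef s b hb']
      have : (⟨a, ha'⟩ : atA s) < ⟨b, hb'⟩ := Subtype.mk_lt_mk.mpr hab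
      exact (φ s).strictMono this

end

noncomputable section

/-- Piecewise strictly monotone permutations of ℕ. -/
def PW : Subgroup (Equiv.Perm ℕ) where
  carrier := {g | ∃ (k : ℕ) (P : Fin k → Set ℕ),
    (∀ x, ∃ i, x ∈ P i) ∧ ∀ i, StrictMonoOn g (P i)}
  one_mem' := ⟨1, fun _ => Set.univ, fun _ => ⟨0, trivial⟩,
    fun _ a _ b _ hab => by simpa using hab⟩
  mul_mem' := by
    rintro g g' ⟨k, P, hcov, hmono⟩ ⟨k', P', hcov', hmono'⟩
    refine ⟨k' * k, fun p => P' (finProdFinEquiv.symm p).1 ∩ g' ⁻¹' (P (finProdFinEquiv.symm p).2),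
      ?_, ?_⟩
    · intro x
      obtain ⟨j, hj⟩ := hcov' x
      obtain ⟨i, hi⟩ := hcov (g' x)
      exact ⟨finProdFinEquiv (j, i), by simp [hj, hi]⟩
    · rintro p a ⟨ha1, ha2⟩ b ⟨hb1, hb2⟩ hab
      have h1 : g' a < g' b := hmono' _ ha1 hb1 hab
      have h2 : g (g' a) < g (g' b) := hmono _ ha2 hb2 h1
      simpa [Equiv.Perm.mul_apply] using h2
  inv_mem' := by
    rintro g ⟨k, P, hcov, hmono⟩
    refine ⟨k, fun i => g '' P i, fun x => ?_, fun i => ?_⟩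
    · obtain ⟨i, hi⟩ := hcov (g.symm x)
      exact ⟨i, g.symm x, hi, g.apply_symm_apply x⟩
    · rintro a ⟨u, hu, rfl⟩ b ⟨v, hv, rfl⟩ hab
      have huv : u < v := by
        rcases lt_trichotomy u v with h | h | h
        · exact h
        · exact absurd (h ▸ rfl) hab.ne
        · exact absurd (hmono i hv hu h) (not_lt.mpr hab.le)
      simpa using huv

end

noncomputable section

/-- Triangular-ish numbers: start of block `k`; block `k` is `[T k, T k + k]` of size `k+1`. -/
def T (k : ℕ) : ℕ := ∑ i ∈ Finset.range k, (i + 1)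

lemma T_succ (k : ℕ) : T (k + 1) = T k + (k + 1) := Finset.sum_range_succ _ _

lemma T_mono : Monotone T := by
  intro a b hab
  exact Finset.sum_le_sum_of_subset (Finset.range_subset_range.mpr hab)

lemma exists_blk (n : ℕ) : ∃ k, n < T (k + 1) := by
  refine ⟨n, ?_⟩
  rw [T_succ]
  omega

/-- Block index of `n`. -/
def blk (n : ℕ) : ℕ := Nat.find (exists_blk n)

lemma blk_spec (n : ℕ) : n < T (blk n + 1) := Nat.find_spec (exists_blk n)

lemma blk_le (n : ℕ) : T (blk n) ≤ n := by
  rcases Nat.eq_zero_or_pos (blk n) with h | h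
  · simp [h, T]
  · have hlt : blk n - 1 < blk n := by omega
    have hmin := Nat.find_min (exists_blk n) hlt
    have he : blk n - 1 + 1 = blk n := by omega
    rw [he] at hmin
    omega

lemma blk_eq {k n : ℕ} (h1 : T k ≤ n) (h2 : n < T (k + 1)) : blk n = k := by
  have hle : blk n ≤ k := Nat.find_min' (exists_blk n) h2
  rcases eq_or_lt_of_le hle with h | h
  · exact h
  · exfalso
    have : T (blk n + 1) ≤ T k := T_mono h
    have := blk_spec n
    omega

/-- reversal within each block -/
def frev (n : ℕ) : ℕ := 2 * T (blk n) + blk n - n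

lemma frev_invol : Function.Involutive frev := by
  intro n
  have h1 := blk_le n
  have h2 := blk_spec n
  rw [T_succ] at h2
  have hb : blk (frev n) = blk n := by
    apply blk_eq
    · unfold frev; omega
    · rw [T_succ]; unfold frev; omega
  have he : frev (frev n) = 2 * T (blk (frev n)) + blk (frev n) - frev n := rfl
  rw [he, hb]
  unfold frev
  omega

/-- The block reversal permutation. -/
def grev : Equiv.Perm ℕ := frev_invol.toPerm

lemma grev_notMem : grev ∉ PW := by
  rintro ⟨k, P, hcov, hmono⟩
  have hblk : ∀ i : Fin (k + 1), blk (T k + (i : ℕ)) = k := by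
    intro i
    apply blk_eq (Nat.le_add_right _ _)
    rw [T_succ]
    omega
  have hval : ∀ i : Fin (k + 1), grev (T k + (i : ℕ)) = T k + (k - (i : ℕ)) := by
    intro i
    show frev (T k + (i : ℕ)) = _
    unfold frev
    rw [hblk i]
    omega
  choose pc hpc using fun i : Fin (k + 1) => hcov (T k + (i : ℕ))
  have main : ∀ i j : Fin (k + 1), pc i = pc j → (i : ℕ) < (j : ℕ) → False := by
    intro i j hij hlt
    have hx : (T k + (i : ℕ)) < T k + (j : ℕ) := by omega
    have hm := hmono (pc i) (hpc i) (hij ▸ hpc j) hx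
    rw [hval i, hval j] at hm
    have hi := i.2
    have hj := j.2
    omega
  obtain ⟨i, j, hne, hij⟩ := Fintype.exists_ne_map_eq_of_card_lt pc (by simp)
  have hvne : (i : ℕ) ≠ (j : ℕ) := fun h => hne (Fin.ext h)
  rcases Nat.lt_or_ge (i : ℕ) (j : ℕ) with hlt | hge
  · exact main i j hij hlt
  · exact main j i hij.symm (by omega)

end

section Topo

def Basics : Set (Set (Equiv.Perm ℕ)) :=
  {U | ∃ (n : ℕ) (A B : Fin n → Set ℕ),
    U = {g : Equiv.Perm ℕ | ∀ i, g '' A i = B i}}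

lemma univ_mem_Basics : Set.univ ∈ Basics := by
  refine ⟨0, Fin.elim0, Fin.elim0, ?_⟩
  ext g
  simp

lemma inter_mem_Basics {U V : Set (Equiv.Perm ℕ)} (hU : U ∈ Basics) (hV : V ∈ Basics) :
    U ∩ V ∈ Basics := by
  obtain ⟨n, A, B, rfl⟩ := hU
  obtain ⟨m, A', B', rfl⟩ := hV
  refine ⟨n + m, Fin.addCases A A', Fin.addCases B B', ?_⟩
  ext g
  simp only [Set.mem_inter_iff, Set.mem_setOf_eq]
  constructor
  · rintro ⟨h1, h2⟩ i
    refine Fin.addCases (fun j => ?_) (fun j => ?_) i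
    · simp only [Fin.addCases_left]; exact h1 j
    · simp only [Fin.addCases_right]; exact h2 j
  · intro h
    constructor
    · intro j
      have := h (Fin.castAdd m j)
      simpa using this
    · intro j
      have := h (Fin.natAdd n j)
      simpa using this

lemma so_basis : @TopologicalSpace.IsTopologicalBasis (Equiv.Perm ℕ) (soTop ℕ) Basics := by
  letI := soTop ℕ
  refine ⟨?_, ?_, rfl⟩
  · intro U hU V hV g hg
    exact ⟨U ∩ V, inter_mem_Basics hU hV, hg, subset_rfl⟩
  · rw [Set.sUnion_eq_univ_iff]
    exact fun g => ⟨Set.univ, univ_mem_Basics, trivial⟩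

lemma dense_PW : @Dense (Equiv.Perm ℕ) (soTop ℕ) (PW : Set (Equiv.Perm ℕ)) := by
  letI := soTop ℕ
  rw [so_basis.dense_iff]
  rintro o ⟨n, A, B, rfl⟩ ⟨g, hg⟩
  obtain ⟨h, h1, h2⟩ := glue n A B g hg
  exact ⟨h, h1, h2⟩

lemma aut_closed (ι : Type) (ar : ι → ℕ) (R : (i : ι) → (Fin (ar i) → ℕ) → Prop)
    (κ : Type) (qar : κ → ℕ) (Q : (q : κ) → (Fin (qar q) → Set ℕ) → Prop) :
    @IsClosed (Equiv.Perm ℕ) (soTop ℕ)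
      {g : Equiv.Perm ℕ |
        (∀ i (a : Fin (ar i) → ℕ), R i a ↔ R i (fun j => g (a j))) ∧
        (∀ q (A : Fin (qar q) → Set ℕ), Q q A ↔ Q q (fun j => g '' A j))} := by
  letI := soTop ℕ
  rw [← isOpen_compl_iff, so_basis.isOpen_iff]
  intro g hg
  rw [Set.mem_compl_iff, Set.mem_setOf_eq, not_and_or] at hg
  rcases hg with hg | hg
  · push_neg at hg
    obtain ⟨i, a, ha⟩ := hg
    refine ⟨{h : Equiv.Perm ℕ | ∀ j, h '' ({a j} : Set ℕ) = {g (a j)}},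
      ⟨ar i, fun j => {a j}, fun j => {g (a j)}, rfl⟩, fun j => by simp, ?_⟩
    intro h hh
    simp only [Set.mem_setOf_eq] at hh
    rw [Set.mem_compl_iff, Set.mem_setOf_eq, not_and_or]
    left
    push_neg
    refine ⟨i, a, ?_⟩
    have hval : ∀ j, h (a j) = g (a j) := by
      intro j
      have := hh j
      have : h (a j) ∈ ({g (a j)} : Set ℕ) := by
        rw [← this]; exact ⟨a j, rfl, rfl⟩
      simpa using this
    have : (fun j => h (a j)) = fun j => g (a j) := funext hval
    rw [this]
    exact ha
  · push_neg at hg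
    obtain ⟨q, A, hA⟩ := hg
    refine ⟨{h : Equiv.Perm ℕ | ∀ j, h '' A j = g '' A j},
      ⟨qar q, A, fun j => g '' A j, rfl⟩, fun j => rfl, ?_⟩
    intro h hh
    simp only [Set.mem_setOf_eq] at hh
    rw [Set.mem_compl_iff, Set.mem_setOf_eq, not_and_or]
    right
    push_neg
    refine ⟨q, A, ?_⟩
    have : (fun j => h '' A j) = fun j => g '' A j := funext hh
    rw [this]
    exact hA

end Topo

theorem stmt_13' :
    ∃ H : Subgroup (Equiv.Perm ℕ),
      (H : Set (Equiv.Perm ℕ)) ≠ Set.univ ∧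
      @closure _ (soTop ℕ) (H : Set (Equiv.Perm ℕ)) = Set.univ ∧
      ¬ ∃ (ι : Type) (ar : ι → ℕ) (R : (i : ι) → (Fin (ar i) → ℕ) → Prop)
          (κ : Type) (qar : κ → ℕ) (Q : (q : κ) → (Fin (qar q) → Set ℕ) → Prop),
          (H : Set (Equiv.Perm ℕ)) =
            {g : Equiv.Perm ℕ |
              (∀ i (a : Fin (ar i) → ℕ), R i a ↔ R i (fun j => g (a j))) ∧
              (∀ q (A : Fin (qar q) → Set ℕ), Q q A ↔ Q q (fun j => g '' A j))} := by
  letI := soTop ℕ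
  have hproper : (PW : Set (Equiv.Perm ℕ)) ≠ Set.univ := by
    intro h
    apply grev_notMem
    have : grev ∈ (PW : Set (Equiv.Perm ℕ)) := by rw [h]; trivial
    exact this
  have hdense : closure (PW : Set (Equiv.Perm ℕ)) = Set.univ := dense_PW.closure_eq
  refine ⟨PW, hproper, hdense, ?_⟩
  rintro ⟨ι, ar, R, κ, qar, Q, hEq⟩
  have hclosed := aut_closed ι ar R κ qar Q
  rw [← hEq] at hclosed
  exact hproper (hclosed.closure_eq ▸ hdense)

/-- There is a proper subgroup of `Sym(ℕ)` which is dense in the second-order topology;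
consequently it is not the automorphism group of any monadic second-order structure on `ℕ`
(finitary relations on `ℕ` plus monadic quantifiers, preserved via the induced action
on subsets). -/
theorem stmt_13 :
    ∃ H : Subgroup (Equiv.Perm ℕ),
      (H : Set (Equiv.Perm ℕ)) ≠ Set.univ ∧
      @closure _ (soTop ℕ) (H : Set (Equiv.Perm ℕ)) = Set.univ ∧
      ¬ ∃ (ι : Type) (ar : ι → ℕ) (R : (i : ι) → (Fin (ar i) → ℕ) → Prop)
          (κ : Type) (qar : κ → ℕ) (Q : (q : κ) → (Fin (qar q) → Set ℕ) → Prop),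
          (H : Set (Equiv.Perm ℕ)) =
            {g : Equiv.Perm ℕ |
              (∀ i (a : Fin (ar i) → ℕ), R i a ↔ R i (fun j => g (a j))) ∧
              (∀ q (A : Fin (qar q) → Set ℕ), Q q A ↔ Q q (fun j => g '' A j))} :=
  stmt_13'
end

section
/- Every subgroup H of Sym(Ω) is the automorphism group of some second-order structure on Ω whose quantifiers are of type (2,2,…,2) (i.e., relations on 𝒫(Ω²)). -/
/-!
Fix a well-order `W` on `Ω`, viewed as a binary relation. An automorphism of a well-order is
the identity, so the stabilizer of `W` in `Sym(Ω)` is trivial. The single unary quantifier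
"`R` lies in the `H`-orbit of `W`" is then preserved by `g` iff `g • W = h • W` for some
`h ∈ H`, i.e. iff `h⁻¹ * g` fixes `W`, i.e. iff `g ∈ H`.
-/

open MulAction Pointwise

namespace MulAction

variable {G X : Type*} [Group G] [MulAction G X]

theorem setOf_forall_mem_orbit_iff_eq_of_stabilizer_le {H : Subgroup G} {x : X}
    (hx : stabilizer G x ≤ H) :
    {g : G | ∀ y, y ∈ orbit H x ↔ g • y ∈ orbit H x} = H := by
  ext g
  simp only [Set.mem_ofPred_eq, SetLike.mem_coe, mem_orbit_iff, Subtype.exists,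
    Subgroup.mk_smul, exists_prop]
  constructor
  · intro hg
    obtain ⟨h, hh, hhx⟩ := (hg x).mp ⟨1, H.one_mem, one_smul G x⟩
    have hstab : h⁻¹ * g ∈ stabilizer G x := by
      rw [mem_stabilizer_iff, mul_smul, ← hhx, inv_smul_smul]
    simpa using H.mul_mem hh (hx hstab)
  · rintro hg y
    constructor
    · rintro ⟨h, hh, rfl⟩
      exact ⟨g * h, H.mul_mem hg hh, mul_smul g h x⟩
    · rintro ⟨h, hh, hhy⟩
      refine ⟨g⁻¹ * h, H.mul_mem (H.inv_mem hg) hh, ?_⟩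
      rw [mul_smul, hhy, inv_smul_smul]

end MulAction

namespace Equiv.Perm

theorem stabilizer_setOf_wellOrder {Ω : Type*} (r : Ω → Ω → Prop) [IsWellOrder Ω r] :
    stabilizer (Perm Ω) {p : Ω × Ω | r p.1 p.2} = ⊥ := by
  refine (Subgroup.eq_bot_iff_forall _).mpr fun g hg => ?_
  have hr : ∀ a b, r (g a) (g b) ↔ r a b := fun a b => by
    have := Set.smul_mem_smul_set_iff (a := g) (s := {p : Ω × Ω | r p.1 p.2}) (x := (a, b))
    rwa [mem_stabilizer_iff.mp hg] at this
  let f : r ≃r r := ⟨g, hr _ _⟩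
  ext a
  exact congrArg (fun e : InitialSeg r r => e a)
    (Subsingleton.elim f.toInitialSeg (InitialSeg.refl r))

end Equiv.Perm

/-- Every subgroup `H` of `Sym(Ω)` is the automorphism group of some second-order
structure on `Ω` whose quantifiers are of type `(2,2,…,2)`, i.e. relations on `𝒫(Ω²)`:
`g` preserves such a quantifier `Q` iff `(R₁,…,R_k) ∈ Q ↔ (g*R₁,…,g*R_k) ∈ Q`, where
`g*R = {(g a, g b) | (a,b) ∈ R}`. -/
theorem stmt_15 (Ω : Type) (H : Subgroup (Equiv.Perm Ω)) :
    ∃ (κ : Type) (qk : κ → ℕ) (Q : (q : κ) → (Fin (qk q) → Set (Ω × Ω)) → Prop),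
      (H : Set (Equiv.Perm Ω)) =
        {g : Equiv.Perm Ω | ∀ q (R : Fin (qk q) → Set (Ω × Ω)),
          Q q R ↔ Q q (fun j => (fun p : Ω × Ω => (g p.1, g p.2)) '' R j)} := by
  let W : Set (Ω × Ω) := {p | WellOrderingRel p.1 p.2}
  refine ⟨Unit, fun _ => 1, fun _ R => R 0 ∈ orbit H W, ?_⟩
  rw [← setOf_forall_mem_orbit_iff_eq_of_stabilizer_le
    ((Equiv.Perm.stabilizer_setOf_wellOrder WellOrderingRel).trans_le bot_le)]
  ext g
  -- `g • R` for the pointwise action on `Set (Ω × Ω)` is definitionally the image in the statement.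
  exact ⟨fun hg _ R => hg (R 0), fun hg y => hg () fun _ => y⟩
end

section
/- Every operation (generalized quantifier) on a fixed domain Ω is invariant under all permutations of Ω if and only if it is definable by a formula of pure L_{∞∞} (McGee's theorem). -/
/-- A relational/quantifier signature. -/
structure Signature : Type 1 where
  rels : Type
  arity : rels → ℕ
  quants : Type
  qlen : quants → ℕ
  qarity : (q : quants) → Fin (qlen q) → ℕ

/-- An interpretation of a signature on a domain `Ω`. -/
structure Interp (S : Signature) (Ω : Type) : Type 1 where
  R : (i : S.rels) → (Fin (S.arity i) → Ω) → Prop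
  Q : (q : S.quants) →
      ((j : Fin (S.qlen q)) → ((Fin (S.qarity q j) → Ω) → Prop)) → Prop

/-- Formulas of `L_{∞∞}` over the signature `S`, with equality, arbitrary-length
conjunctions, and arbitrarily long strings of universal quantifiers. -/
inductive Fml (S : Signature) (V : Type) : Type 1
  | rel (i : S.rels) (v : Fin (S.arity i) → V)
  | eq (x y : V)
  | not (φ : Fml S V)
  | conj (I : Type) (f : I → Fml S V)
  | all (I : Type) (v : I → V) (φ : Fml S V)
  | quant (q : S.quants) (v : (j : Fin (S.qlen q)) → Fin (S.qarity q j) → V)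
      (φ : (j : Fin (S.qlen q)) → Fml S V)

open Classical in
noncomputable def updMany {V Ω I : Type} (σ : V → Ω) (v : I → V) (w : I → Ω) : V → Ω :=
  fun x => if h : ∃ i, v i = x then w h.choose else σ x

/-- Satisfaction under an assignment. -/
noncomputable def Sat {S : Signature} {Ω V : Type} (M : Interp S Ω) :
    (V → Ω) → Fml S V → Prop
  | σ, .rel i v => M.R i (fun j => σ (v j))
  | σ, .eq x y => σ x = σ y
  | σ, .not φ => ¬ Sat M σ φ
  | σ, .conj _ f => ∀ i, Sat M σ (f i)
  | σ, .all _ v φ => ∀ w, Sat M (updMany σ v w) φ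
  | σ, .quant q v φ =>
      M.Q q (fun j => fun t => Sat M (updMany σ (v j) t) (φ j))

/-- The purely logical signature with `K` relation symbols of arities `m` and no
quantifier symbols. -/
def pureSig (K : ℕ) (m : Fin K → ℕ) : Signature where
  rels := Fin K
  arity := m
  quants := Empty
  qlen := fun q => q.elim
  qarity := fun q => q.elim

/-- The interpretation of the pure signature given by the argument relations `Rb`. -/
def pureInterp {Ω : Type} {K : ℕ} {m : Fin K → ℕ}
    (Rb : (j : Fin K) → (Fin (m j) → Ω) → Prop) : Interp (pureSig K m) Ω where
  R := Rb
  Q := fun q => Empty.elim q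

/-! A relational structure `R` on `Ω` is pinned down up to permutation by one sentence of pure
`L_{∞∞}`: existentially quantify a variable for each element, state the complete atomic diagram
of `R` on these variables, and state that they exhaust the domain. For finite `Ω` exhaustion
follows from injectivity; for infinite `Ω` the variables can range over `Ω ∖ {c}`, which has
the cardinality of `Ω`, leaving `c` free for `∀ c, ⋁ₐ c = a`. A permutation-invariant `Q₀` is
then the disjunction of these sentences over its members. Conversely, satisfaction commutes with
permutations of the domain. -/

open Function

abbrev RelStr {K : ℕ} (m : Fin K → ℕ) (α : Type) : Type := (j : Fin K) → (Fin (m j) → α) → Prop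

namespace RelStr

variable {K : ℕ} {m : Fin K → ℕ} {α β γ : Type}

def map (e : α ≃ β) (R : RelStr m α) : RelStr m β := fun j t => R j (fun i => e.symm (t i))

lemma map_map (e : α ≃ β) (f : β ≃ γ) (R : RelStr m α) : (R.map e).map f = R.map (e.trans f) :=
  rfl

lemma eq_map_iff {S : RelStr m β} {R : RelStr m α} (e : α ≃ β) :
    S = R.map e ↔ ∀ j t, S j (fun i => e (t i)) ↔ R j t := by
  refine ⟨fun h j t => by simp [h, map], fun h => ?_⟩
  funext j t
  simpa [map] using propext (h j fun i => e.symm (t i))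

lemma exists_equiv_eq_map_iff {S : RelStr m β} {R : RelStr m α} :
    (∃ e : α ≃ β, S = R.map e) ↔
      ∃ w : α → β, Bijective w ∧ ∀ j t, S j (fun i => w (t i)) ↔ R j t := by
  constructor
  · rintro ⟨e, he⟩
    exact ⟨e, e.bijective, (eq_map_iff e).mp he⟩
  · rintro ⟨w, hw, hS⟩
    exact ⟨Equiv.ofBijective w hw, (eq_map_iff _).mpr hS⟩

end RelStr

namespace Fml

variable {S : Signature} {V : Type}

def disj (I : Type) (f : I → Fml S V) : Fml S V :=
  .not (.conj I fun i => .not (f i))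

def ex (I : Type) (v : I → V) (φ : Fml S V) : Fml S V :=
  .not (.all I v (.not φ))

def and (φ ψ : Fml S V) : Fml S V :=
  .conj Bool fun b => cond b φ ψ

open Classical in
noncomputable def lit (p : Prop) (φ : Fml S V) : Fml S V :=
  if p then φ else .not φ

end Fml

section Sat

variable {S : Signature} {Ω V : Type} (M : Interp S Ω) (σ : V → Ω)

lemma sat_disj (I : Type) (f : I → Fml S V) : Sat M σ (.disj I f) ↔ ∃ i, Sat M σ (f i) := by
  simp [Fml.disj, Sat]

lemma sat_ex (I : Type) (v : I → V) (φ : Fml S V) :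
    Sat M σ (.ex I v φ) ↔ ∃ w, Sat M (updMany σ v w) φ := by
  simp [Fml.ex, Sat]

lemma sat_and (φ ψ : Fml S V) : Sat M σ (.and φ ψ) ↔ Sat M σ φ ∧ Sat M σ ψ := by
  simp [Fml.and, Sat, Bool.forall_bool, and_comm]

lemma sat_lit (p : Prop) (φ : Fml S V) : Sat M σ (.lit p φ) ↔ (Sat M σ φ ↔ p) := by
  by_cases h : p <;> simp [Fml.lit, h, Sat]

end Sat

section updMany

variable {V Ω I : Type} (σ : V → Ω) {v : I → V} (w : I → Ω)

lemma updMany_apply_of_injective (hv : Injective v) (i : I) : updMany σ v w (v i) = w i := by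
  have h : ∃ j, v j = v i := ⟨i, rfl⟩
  rw [updMany, dif_pos h, hv h.choose_spec]

lemma updMany_apply_of_forall_ne {x : V} (hx : ∀ i, v i ≠ x) : updMany σ v w x = σ x := by
  rw [updMany, dif_neg fun ⟨i, hi⟩ => hx i hi]

lemma comp_updMany (g : Ω → Ω) :
    (fun x => g (updMany σ v w x)) = updMany (fun x => g (σ x)) v (fun i => g (w i)) := by
  funext x
  by_cases h : ∃ i, v i = x <;> simp only [updMany, h, dite_true, dite_false]

end updMany

section PureSignature

variable {Ω V : Type} {K : ℕ} {m : Fin K → ℕ}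

lemma sat_map_perm (R : RelStr m Ω) (g : Equiv.Perm Ω) (φ : Fml (pureSig K m) V) (σ : V → Ω) :
    Sat (pureInterp (R.map g)) (fun x => g (σ x)) φ ↔ Sat (pureInterp R) σ φ := by
  induction φ generalizing σ with
  | rel i v =>
    simp only [Sat, pureInterp, RelStr.map, Equiv.symm_apply_apply]
    rfl
  | eq x y => simp only [Sat, g.injective.eq_iff]
  | not φ ih => exact not_congr (ih σ)
  | conj I f ih => exact forall_congr' fun i => ih i σ
  | all I v φ ih =>
    simp only [Sat]
    refine ⟨fun h w => ?_, fun h w => ?_⟩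
    · simpa only [← comp_updMany, ih] using h fun i => g (w i)
    · have hw := h fun i => g.symm (w i)
      rwa [← ih, comp_updMany, funext fun i => g.apply_symm_apply (w i)] at hw
  | quant q => exact q.elim

variable {α : Type}

noncomputable def diagram (ι : α → V) (R : RelStr m α) : Fml (pureSig K m) V :=
  .conj ((α × α) ⊕ Σ j, (Fin (m j) → α)) <| Sum.elim
    (fun p => .lit (p.1 = p.2) (.eq (ι p.1) (ι p.2)))
    (fun t => .lit (R t.1 t.2) (.rel t.1 fun i => ι (t.2 i)))

lemma sat_diagram (S : RelStr m Ω) (σ : V → Ω) (ι : α → V) (R : RelStr m α) :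
    Sat (pureInterp S) σ (diagram ι R) ↔
      Injective (fun a => σ (ι a)) ∧ ∀ j t, S j (fun i => σ (ι (t i))) ↔ R j t := by
  simp only [diagram, Sat, Sum.forall, Sum.elim_inl, Sum.elim_inr, sat_lit, Prod.forall,
    Sigma.forall, pureInterp]
  refine and_congr ⟨fun h a b => (h a b).mp, fun h a b => ⟨@h a b, ?_⟩⟩ Iff.rfl
  rintro rfl
  rfl

def covers (ι : α → V) (c : V) : Fml (pureSig K m) V :=
  .all Unit (fun _ => c) (.disj α fun a => .eq (ι a) c)

lemma sat_covers (S : RelStr m Ω) (σ : V → Ω) {ι : α → V} {c : V} (hc : ∀ a, ι a ≠ c) :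
    Sat (pureInterp S) σ (covers ι c) ↔ Surjective (fun a => σ (ι a)) := by
  have hσ (w : Unit → Ω) (a : α) : updMany σ (fun _ => c) w (ι a) = σ (ι a) :=
    updMany_apply_of_forall_ne _ _ fun _ => (hc a).symm
  simp only [covers, Sat, sat_disj, hσ,
    updMany_apply_of_injective _ _ (injective_of_subsingleton _) ()]
  exact ⟨fun h x => h fun _ => x, fun h w => h (w ())⟩

end PureSignature

section Isomorphism

variable {Ω V α : Type} {K : ℕ} {m : Fin K → ℕ}

lemma sat_ex_diagram (S : RelStr m Ω) (σ : V → Ω) {ι : α → V} (hι : Injective ι)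
    (R : RelStr m α) :
    Sat (pureInterp S) σ (.ex α ι (diagram ι R)) ↔
      ∃ w : α → Ω, Injective w ∧ ∀ j t, S j (fun i => w (t i)) ↔ R j t := by
  simp only [sat_ex, sat_diagram, updMany_apply_of_injective _ _ hι]

lemma sat_ex_diagram_and_covers (S : RelStr m Ω) (σ : V → Ω) {ι : α → V} (hι : Injective ι)
    {c : V} (hc : ∀ a, ι a ≠ c) (R : RelStr m α) :
    Sat (pureInterp S) σ (.ex α ι (.and (diagram ι R) (covers ι c))) ↔
      ∃ e : α ≃ Ω, S = R.map e := by
  simp only [RelStr.exists_equiv_eq_map_iff, sat_ex, sat_and, sat_diagram, sat_covers _ _ hc,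
    updMany_apply_of_injective _ _ hι, Bijective]
  exact exists_congr fun w => by tauto

variable (Ω) in
def Definable (P : RelStr m Ω → Prop) : Prop :=
  ∃ φ : Fml (pureSig K m) Ω, ∀ S σ, Sat (pureInterp S) σ φ ↔ P S

lemma Definable.map_perm_iff {P : RelStr m Ω → Prop} (hP : Definable Ω P) (g : Equiv.Perm Ω)
    (R : RelStr m Ω) : P (R.map g) ↔ P R := by
  obtain ⟨φ, hφ⟩ := hP
  rw [← hφ R id, ← sat_map_perm R g φ id, hφ]

lemma definable_exists {I : Type} {P : I → RelStr m Ω → Prop} (hP : ∀ i, Definable Ω (P i)) :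
    Definable Ω fun S => ∃ i, P i S := by
  choose φ hφ using hP
  exact ⟨.disj I φ, fun S σ => by simp only [sat_disj, hφ]⟩

lemma definable_orbit_of_finite [Finite Ω] (R : RelStr m Ω) :
    Definable Ω fun S => ∃ g : Equiv.Perm Ω, S = R.map g := by
  refine ⟨.ex Ω id (diagram id R), fun S σ => ?_⟩
  simp only [sat_ex_diagram S σ injective_id, RelStr.exists_equiv_eq_map_iff,
    Finite.injective_iff_bijective]

lemma definable_orbit_of_embedding {ι : α → Ω} (hι : Injective ι) {c : Ω} (hc : ∀ a, ι a ≠ c)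
    (e : α ≃ Ω) (R : RelStr m Ω) : Definable Ω fun S => ∃ g : Equiv.Perm Ω, S = R.map g := by
  refine ⟨.ex α ι (.and (diagram ι (R.map e.symm)) (covers ι c)), fun S σ => ?_⟩
  rw [sat_ex_diagram_and_covers S σ hι hc]
  refine ⟨fun ⟨f, hf⟩ => ⟨e.symm.trans f, hf⟩, fun ⟨g, hg⟩ => ⟨e.trans g, ?_⟩⟩
  rwa [RelStr.map_map, ← Equiv.trans_assoc, e.symm_trans_self, Equiv.refl_trans]

lemma definable_orbit_of_infinite [Infinite Ω] (R : RelStr m Ω) :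
    Definable Ω fun S => ∃ g : Equiv.Perm Ω, S = R.map g := by
  obtain ⟨c⟩ := (inferInstance : Nonempty Ω)
  obtain ⟨e⟩ : Nonempty (({c}ᶜ : Set Ω) ≃ Ω) := Cardinal.eq.mp <| Cardinal.mk_compl_of_infinite _ <|
    by simpa using Cardinal.one_lt_aleph0.trans_le (Cardinal.aleph0_le_mk Ω)
  exact definable_orbit_of_embedding Subtype.val_injective (fun a => a.2) e R

lemma definable_orbit (R : RelStr m Ω) :
    Definable Ω fun S => ∃ g : Equiv.Perm Ω, S = R.map g := by
  cases finite_or_infinite Ω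
  · exact definable_orbit_of_finite R
  · exact definable_orbit_of_infinite R

end Isomorphism

/-- McGee's theorem: a generalized quantifier (operation) `Q₀` of type `(m 0, …, m (K-1))`
on a fixed domain `Ω` is invariant under all permutations of `Ω` if and only if it is
definable by a sentence of pure `L_{∞∞}` (no nonlogical symbols beyond fresh predicate
symbols for its arguments). -/
theorem stmt_17 (Ω : Type) (K : ℕ) (m : Fin K → ℕ)
    (Q₀ : ((j : Fin K) → (Fin (m j) → Ω) → Prop) → Prop) :
    (∀ (g : Equiv.Perm Ω) (Rb : (j : Fin K) → (Fin (m j) → Ω) → Prop),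
        Q₀ Rb ↔ Q₀ (fun j t => Rb j (fun i => g.symm (t i)))) ↔
    ∃ φ : Fml (pureSig K m) Ω,
      ∀ (Rb : (j : Fin K) → (Fin (m j) → Ω) → Prop) (σ : Ω → Ω),
        Sat (pureInterp Rb) σ φ ↔ Q₀ Rb := by
  refine ⟨fun hinv => ?_, fun hQ g R => (Definable.map_perm_iff hQ g R).symm⟩
  have hQ : Q₀ = fun S => ∃ R : {R // Q₀ R}, ∃ g : Equiv.Perm Ω, S = RelStr.map g R.1 := by
    funext S
    exact propext ⟨fun hS => ⟨⟨S, hS⟩, 1, rfl⟩, fun ⟨R, g, hS⟩ => hS ▸ (hinv g R).mp R.2⟩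
  rw [hQ]
  exact definable_exists fun R => definable_orbit R.1
end
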